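/- Let Γ ⊆ ℕ be a semigroup of one of the following forms: (i) Γ_{m,s,b} = {im : i = 0,…,s} ∪ [sm + b, ∞) with 1 ≤ b < m and s ≥ 1; (ii) Γ_{m,r} = {0} ∪ [m, m+r−1] ∪ [m+r+1, ∞) with 2 ≤ r ≤ m−1; (iii) Γ_m = {0, m} ∪ [m+2, 2m] ∪ [2m+2, ∞) with m ≥ 3. Then for every x ∈ ℕ \ Γ, Γ ∩ (x + Γ) ⊆ [c(x), ∞), where c(x) = min{n ∈ ℕ : [n, ∞) ⊆ Γ ∪ (x + Γ)}. -/

import Mathlib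

/-!
If `M = x + g` lies in `Γ ∩ (x + Γ)` with `x ∉ Γ`, then `g ≠ 0`. For `Γ_{m,s,b}` a multiple `i * m`
cannot be such an `M` (else `g = j * m` and `x = (i - j) * m ∈ Γ`), so `M` is past the conductor.
For `Γ_{m,r}` and `Γ_m`, `g ≥ m` gives `k - x ≥ m` for every `k ≥ M`, and the few gaps above `m`
(`m + r`, resp. `m + 1` and `2m + 1`) are avoided by `k - x` whenever `k` itself is a gap.
Either way `[M, ∞) ⊆ Γ ∪ (x + Γ)`, so `c(x) ≤ M`.
-/

namespace NumericalSemigroup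

def gammaMSB (m s b : ℕ) : Set ℕ := {x | ∃ i ≤ s, x = i * m} ∪ {x | s * m + b ≤ x}

def gammaMR (m r : ℕ) : Set ℕ := {0} ∪ {x | m ≤ x ∧ x ≤ m + r - 1} ∪ {x | m + r + 1 ≤ x}

def gammaM (m : ℕ) : Set ℕ := {0, m} ∪ {x | m + 2 ≤ x ∧ x ≤ 2 * m} ∪ {x | 2 * m + 2 ≤ x}

/-- `Γ ∪ (x + Γ)` contains `[n, ∞)`; `c(x)` is the least such `n`. -/
def CoversFrom (Γ : Set ℕ) (x n : ℕ) : Prop := ∀ k, n ≤ k → k ∈ Γ ∨ ∃ g ∈ Γ, k = x + g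

theorem conductor_le_of_add_mem_gammaMSB {m s b x g : ℕ} (hx : x ∉ gammaMSB m s b)
    (hg : g ∈ gammaMSB m s b) (hxg : x + g ∈ gammaMSB m s b) : s * m + b ≤ x + g := by
  simp only [gammaMSB, Set.mem_union, Set.mem_ofPred_eq, not_or, not_exists, not_and] at hx hg hxg
  obtain ⟨hx_mul, hx_lt⟩ := hx
  rcases hxg with ⟨i, hi, hxg_eq⟩ | hxg_ge
  · exfalso
    have him : i * m ≤ s * m := Nat.mul_le_mul_right m hi
    rcases hg with ⟨j, -, rfl⟩ | hg_ge
    · rcases Nat.eq_zero_or_pos m with rfl | hm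
      · exact hx_mul 0 (Nat.zero_le s) (by simpa using hxg_eq)
      · have hji : j ≤ i := Nat.le_of_mul_le_mul_right (by omega) hm
        exact hx_mul (i - j) (by omega) (by rw [Nat.sub_mul]; omega)
    · exact hx_mul 0 (Nat.zero_le s) (by omega)
  · exact hxg_ge

theorem coversFrom_gammaMSB {m s b x g : ℕ} (hx : x ∉ gammaMSB m s b)
    (hg : g ∈ gammaMSB m s b) (hxg : x + g ∈ gammaMSB m s b) :
    CoversFrom (gammaMSB m s b) x (x + g) := fun _ hk =>
  Or.inl (Or.inr (le_trans (conductor_le_of_add_mem_gammaMSB hx hg hxg) hk))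

theorem coversFrom_gammaMR {m r x g : ℕ} (hx : x ∉ gammaMR m r) (hg : g ∈ gammaMR m r)
    (hxg : x + g ∈ gammaMR m r) : CoversFrom (gammaMR m r) x (x + g) := by
  simp only [gammaMR, CoversFrom, Set.mem_union, Set.mem_ofPred_eq, Set.mem_singleton_iff]
    at hx hg hxg ⊢
  intro k hk
  by_cases hk_mem : (k = 0 ∨ m ≤ k ∧ k ≤ m + r - 1) ∨ m + r + 1 ≤ k
  · exact Or.inl hk_mem
  · exact Or.inr ⟨k - x, by omega, by omega⟩

theorem coversFrom_gammaM {m x g : ℕ} (hx : x ∉ gammaM m) (hg : g ∈ gammaM m)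
    (hxg : x + g ∈ gammaM m) : CoversFrom (gammaM m) x (x + g) := by
  simp only [gammaM, CoversFrom, Set.mem_union, Set.mem_ofPred_eq, Set.mem_insert_iff,
    Set.mem_singleton_iff] at hx hg hxg ⊢
  intro k hk
  by_cases hk_mem : ((k = 0 ∨ k = m) ∨ m + 2 ≤ k ∧ k ≤ 2 * m) ∨ 2 * m + 2 ≤ k
  · exact Or.inl hk_mem
  · exact Or.inr ⟨k - x, by omega, by omega⟩

end NumericalSemigroup

open NumericalSemigroup in
/-- the semigroups Γ_{m,s,b}, Γ_{m,r} and Γ_m are monomial: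
for every x ∉ Γ, Γ ∩ (x + Γ) ⊆ [c(x), ∞). -/
theorem stmt12 (Γ : Set ℕ)
    (hform :
      (∃ m s b : ℕ, 1 ≤ b ∧ b < m ∧ 1 ≤ s ∧
        Γ = {x | ∃ i ≤ s, x = i * m} ∪ {x | s * m + b ≤ x}) ∨
      (∃ m r : ℕ, 2 ≤ r ∧ r ≤ m - 1 ∧
        Γ = {0} ∪ {x | m ≤ x ∧ x ≤ m + r - 1} ∪ {x | m + r + 1 ≤ x}) ∨
      (∃ m : ℕ, 3 ≤ m ∧
        Γ = {0, m} ∪ {x | m + 2 ≤ x ∧ x ≤ 2 * m} ∪ {x | 2 * m + 2 ≤ x})) :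
    ∀ x : ℕ, x ∉ Γ → ∀ m ∈ Γ, (∃ g ∈ Γ, m = x + g) →
      sInf {n : ℕ | ∀ k : ℕ, n ≤ k → k ∈ Γ ∨ ∃ g ∈ Γ, k = x + g} ≤ m := by
  rintro x hx _ hxg ⟨g, hg, rfl⟩
  suffices CoversFrom Γ x (x + g) from Nat.sInf_le this
  rcases hform with ⟨m, s, b, -, -, -, rfl⟩ | ⟨m, r, -, -, rfl⟩ | ⟨m, -, rfl⟩
  · exact coversFrom_gammaMSB hx hg hxg
  · exact coversFrom_gammaMR hx hg hxg
  · exact coversFrom_gammaM hx hg hxg
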